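/- The upper central series of the group U_2 of unitriangular automorphisms of A_2 = K⟨x,y⟩ has length exactly ω + 1: (i) Z_k(U_2) is a proper subgroup of Z_{k+1}(U_2) for every non-negative integer k; (ii) the union Z_ω(U_2) = ⋃_{k≥0} Z_k(U_2) is a proper subgroup of U_2; and (iii) for all g, h ∈ U_2 the commutator [g,h] lies in Z_ω(U_2), so the (ω+1)-st hypercenter Z_{ω+1}(U_2) = { g ∈ U_2 : [g,h] ∈ Z_ω(U_2) for all h ∈ U_2 } is all of U_2. -/

import Mathlib

/-!
`U₂` is isomorphic to the group of pairs `(f, b) ∈ K[y] × K`, the pair standing for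
`(x + f(y), y + b)`, with product `(f, b) * (g, c) = (f(y) + g(y + b), b + c)`.
The commutator of `(f, 0)` with `(g, c)` is `(f(y) - f(y + c), 0)`, and in characteristic zero
`f(y) - f(y + c)` has degree exactly `deg f - 1` when `c ≠ 0`; commutators with `(y ^ (k + 1), 0)`
detect `b ≠ 0`. Hence `Z_k(U₂) = {(f, 0) : deg f < k}`: these grow strictly, their union misses
the shift `(0, 1)`, and every commutator has `b = 0`.
-/

noncomputable section
open FreeAlgebra
open scoped commutatorElement

abbrev A2 (K : Type) [Field K] := FreeAlgebra K (Fin 2)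

private lemma adjoin_stable {K : Type} [Field K]
    (φ : A2 K ≃ₐ[K] A2 K) (b : K)
    (hy : φ (ι K 1) = ι K 1 + algebraMap K (A2 K) b) :
    ∀ u ∈ Algebra.adjoin K ({ι K 1} : Set (A2 K)),
      φ u ∈ Algebra.adjoin K ({ι K 1} : Set (A2 K)) := by
  intro u hu
  induction hu using Algebra.adjoin_induction with
  | mem v hv =>
      rcases hv with rfl
      rw [hy]
      exact add_mem (Algebra.self_mem_adjoin_singleton K _) (Subalgebra.algebraMap_mem _ _)
  | algebraMap r => rw [AlgEquiv.commutes]; exact Subalgebra.algebraMap_mem _ _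
  | add u v _ _ hu hv => rw [map_add]; exact add_mem hu hv
  | mul u v _ _ hu hv => rw [map_mul]; exact mul_mem hu hv

/-- The group `U₂` of unitriangular automorphisms of the free associative algebra
`A₂ = K⟨x,y⟩` (with `x = ι K 0`, `y = ι K 1`): automorphisms sending
`x ↦ x + f(y)`, `y ↦ y + b·1` with `f ∈ K⟨y⟩`, `b ∈ K`. -/
def U2 (K : Type) [Field K] : Subgroup (A2 K ≃ₐ[K] A2 K) where
  carrier := {φ | ∃ f ∈ Algebra.adjoin K ({ι K 1} : Set (A2 K)), ∃ b : K,
    φ (ι K 0) = ι K 0 + f ∧ φ (ι K 1) = ι K 1 + algebraMap K (A2 K) b}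
  one_mem' := ⟨0, Subalgebra.zero_mem _, 0, by simp, by simp⟩
  mul_mem' := by
    rintro φ ψ ⟨f, hf, b, hfx, hfy⟩ ⟨h, hh, c, hhx, hhy⟩
    refine ⟨f + φ h, add_mem hf (adjoin_stable φ b hfy h hh), b + c, ?_, ?_⟩
    · show φ (ψ (ι K 0)) = _
      rw [hhx, map_add, hfx, add_assoc]
    · show φ (ψ (ι K 1)) = _
      rw [hhy, map_add, hfy, AlgEquiv.commutes, map_add, add_assoc]
  inv_mem' := by
    rintro φ ⟨f, hf, b, hfx, hfy⟩
    have hsy : φ.symm (ι K 1) = ι K 1 + algebraMap K (A2 K) (-b) := by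
      have h1 := congrArg φ.symm hfy
      rw [AlgEquiv.symm_apply_apply, map_add, AlgEquiv.commutes] at h1
      rw [eq_sub_of_add_eq h1.symm, map_neg, sub_eq_add_neg]
    have hsx : φ.symm (ι K 0) = ι K 0 + (-(φ.symm f)) := by
      have h1 := congrArg φ.symm hfx
      rw [AlgEquiv.symm_apply_apply, map_add] at h1
      rw [eq_sub_of_add_eq h1.symm, sub_eq_add_neg]
    exact ⟨-(φ.symm f), neg_mem (adjoin_stable φ.symm (-b) hsy f hf), -b, hsx, hsy⟩

namespace Polynomial

variable {R : Type*} [CommRing R]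

lemma degree_sub_taylor_lt {f : R[X]} (hf : f ≠ 0) (c : R) :
    (f - taylor c f).degree < f.degree :=
  degree_sub_lt_left (degree_taylor f c).symm hf (leadingCoeff_taylor c f).symm

lemma degree_sub_taylor_lt_of_degree_lt {f : R[X]} {k : ℕ} (hf : f.degree < ↑(k + 1)) (c : R) :
    (f - taylor c f).degree < k := by
  rcases eq_or_ne f 0 with rfl | hf0
  · simp
  · refine (degree_sub_taylor_lt hf0 c).trans_le ?_
    rw [degree_eq_natDegree hf0] at hf ⊢
    exact_mod_cast Nat.lt_succ_iff.mp (by exact_mod_cast hf)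

lemma coeff_taylor_sub_natDegree_sub_one {f : R[X]} (hf : 1 ≤ f.natDegree) (c : R) :
    (taylor c f - f).coeff (f.natDegree - 1) = f.natDegree * f.leadingCoeff * c := by
  obtain ⟨m, hm⟩ : ∃ m, f.natDegree = m + 1 := ⟨_, (Nat.sub_add_cancel hf).symm⟩
  have hasse : hasseDeriv m f = C (f.coeff m) + C ((m + 1 : ℕ) * f.leadingCoeff) * X := by
    ext (_ | _ | j)
    · simp [hasseDeriv_coeff]
    · rw [hasseDeriv_coeff, zero_add, add_comm, Nat.choose_succ_self_right, leadingCoeff, hm]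
      simp
    · rw [hasseDeriv_coeff, coeff_eq_zero_of_natDegree_lt (by omega)]
      simp [coeff_one]
  rw [hm, Nat.add_sub_cancel, coeff_sub, taylor_coeff, hasse]
  simp only [eval_add, eval_mul, eval_C, eval_X]
  ring

lemma degree_lt_of_degree_sub_taylor_lt [NoZeroDivisors R] [CharZero R] {f : R[X]} {c : R}
    (hc : c ≠ 0) {k : ℕ} (h : (f - taylor c f).degree < k) : f.degree < ↑(k + 1) := by
  by_contra! hle
  have hf0 : f ≠ 0 := by rintro rfl; simp at hle
  have hk : k + 1 ≤ f.natDegree := by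
    rwa [degree_eq_natDegree hf0, Nat.cast_le] at hle
  have hcoeff : (taylor c f - f).coeff (f.natDegree - 1) = 0 := by
    have hdeg : (f - taylor c f).degree < ↑(f.natDegree - 1) :=
      h.trans_le (by exact_mod_cast (by omega))
    rw [← neg_sub, coeff_neg, coeff_eq_zero_of_degree_lt hdeg, neg_zero]
  rw [coeff_taylor_sub_natDegree_sub_one (by omega)] at hcoeff
  have hn : (f.natDegree : R) ≠ 0 := Nat.cast_ne_zero.mpr (by omega)
  exact mul_ne_zero (mul_ne_zero hn (leadingCoeff_ne_zero.mpr hf0)) hc hcoeff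

end Polynomial

open Polynomial

@[ext]
structure UnitriangularPair (R : Type*) [CommRing R] where
  f : R[X]
  b : R

namespace UnitriangularPair

variable {R : Type*} [CommRing R]

instance : Mul (UnitriangularPair R) := ⟨fun q r => ⟨q.f + taylor q.b r.f, q.b + r.b⟩⟩
instance : One (UnitriangularPair R) := ⟨⟨0, 0⟩⟩
instance : Inv (UnitriangularPair R) := ⟨fun q => ⟨-taylor (-q.b) q.f, -q.b⟩⟩

@[simp] lemma f_mul (q r : UnitriangularPair R) : (q * r).f = q.f + taylor q.b r.f := rfl
@[simp] lemma b_mul (q r : UnitriangularPair R) : (q * r).b = q.b + r.b := rfl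
@[simp] lemma f_one : (1 : UnitriangularPair R).f = 0 := rfl
@[simp] lemma b_one : (1 : UnitriangularPair R).b = 0 := rfl
@[simp] lemma f_inv (q : UnitriangularPair R) : q⁻¹.f = -taylor (-q.b) q.f := rfl
@[simp] lemma b_inv (q : UnitriangularPair R) : q⁻¹.b = -q.b := rfl

instance : Group (UnitriangularPair R) where
  mul_assoc q r s := by
    ext1
    · simp only [f_mul, b_mul, map_add, taylor_taylor, add_assoc]
    · exact add_assoc _ _ _
  one_mul q := by ext1 <;> simp
  mul_one q := by ext1 <;> simp
  inv_mul_cancel q := by ext1 <;> simp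

@[simp] lemma b_commutatorElement (q r : UnitriangularPair R) : ⁅q, r⁆.b = 0 := by
  simp [commutatorElement_def]

lemma f_commutatorElement (q r : UnitriangularPair R) :
    ⁅q, r⁆.f = q.f + taylor q.b r.f - taylor r.b q.f - r.f := by
  simp only [commutatorElement_def, f_mul, b_mul, f_inv, b_inv, map_neg, taylor_taylor,
    add_neg_cancel_comm, add_neg_cancel, taylor_zero]
  ring

lemma mem_upperCentralSeries_iff [NoZeroDivisors R] [CharZero R] :
    ∀ (k : ℕ) (q : UnitriangularPair R),
      q ∈ Subgroup.upperCentralSeries (UnitriangularPair R) k ↔ q.b = 0 ∧ q.f.degree < k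
  | 0, q => by
    simp [Subgroup.upperCentralSeries_zero, UnitriangularPair.ext_iff, and_comm]
  | k + 1, q => by
    simp only [Subgroup.mem_upperCentralSeries_succ_iff, mem_upperCentralSeries_iff k,
      b_commutatorElement, true_and]
    constructor
    · intro h
      have hb : q.b = 0 := by
        by_contra hb
        have hX := h ⟨X ^ (k + 1), 0⟩
        simp only [f_commutatorElement, taylor_zero] at hX
        rw [show q.f + taylor q.b (X ^ (k + 1)) - q.f - X ^ (k + 1)
            = -(X ^ (k + 1) - taylor q.b (X ^ (k + 1))) by ring, degree_neg] at hX
        exact (degree_lt_of_degree_sub_taylor_lt hb hX).ne (degree_X_pow _)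
      refine ⟨hb, degree_lt_of_degree_sub_taylor_lt one_ne_zero ?_⟩
      simpa [f_commutatorElement, hb] using h ⟨0, 1⟩
    · rintro ⟨hb, hf⟩ r
      rw [f_commutatorElement, hb, taylor_zero, add_sub_right_comm, add_sub_cancel_right]
      exact degree_sub_taylor_lt_of_degree_lt hf r.b

end UnitriangularPair

lemma A2.algHom_ext {K : Type} [Field K] {A : Type*} [Semiring A] [Algebra K A]
    {φ ψ : A2 K →ₐ[K] A} (hx : φ (ι K 0) = ψ (ι K 0)) (hy : φ (ι K 1) = ψ (ι K 1)) :
    φ = ψ :=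
  FreeAlgebra.hom_ext <| funext fun i => by fin_cases i <;> assumption

lemma A2.aeval_y_add_algebraMap {K : Type} [Field K] (b : K) (g : K[X]) :
    aeval (ι K 1 + algebraMap K (A2 K) b) g = aeval (ι K 1) (taylor b g) := by
  rw [taylor_apply, aeval_comp]
  simp

def A2.retractY (K : Type) [Field K] : A2 K →ₐ[K] K[X] :=
  FreeAlgebra.lift K ![0, X]

@[simp] lemma A2.retractY_x {K : Type} [Field K] : A2.retractY K (ι K 0) = 0 := by
  simp [A2.retractY]

@[simp] lemma A2.retractY_y {K : Type} [Field K] : A2.retractY K (ι K 1) = X := by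
  simp [A2.retractY]

@[simp] lemma A2.retractY_aeval_y {K : Type} [Field K] (g : K[X]) :
    A2.retractY K (aeval (ι K 1) g) = g := by
  rw [← aeval_algHom_apply, A2.retractY_y, aeval_X_left_apply]

namespace UnitriangularPair

variable {K : Type} [Field K]

def toAlgHom (q : UnitriangularPair K) : A2 K →ₐ[K] A2 K :=
  FreeAlgebra.lift K ![ι K 0 + aeval (ι K 1) q.f, ι K 1 + algebraMap K (A2 K) q.b]

@[simp] lemma toAlgHom_x (q : UnitriangularPair K) :
    q.toAlgHom (ι K 0) = ι K 0 + aeval (ι K 1) q.f := by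
  simp [toAlgHom]

@[simp] lemma toAlgHom_y (q : UnitriangularPair K) :
    q.toAlgHom (ι K 1) = ι K 1 + algebraMap K (A2 K) q.b := by
  simp [toAlgHom]

lemma toAlgHom_mul (q r : UnitriangularPair K) :
    (q * r).toAlgHom = q.toAlgHom.comp r.toAlgHom := by
  refine A2.algHom_ext ?_ ?_
  · simp only [toAlgHom_x, f_mul, AlgHom.comp_apply, map_add, ← aeval_algHom_apply, toAlgHom_y,
      A2.aeval_y_add_algebraMap, add_assoc]
  · simp only [toAlgHom_y, b_mul, AlgHom.comp_apply, map_add, AlgHom.commutes, add_assoc]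

lemma toAlgHom_one : (1 : UnitriangularPair K).toAlgHom = AlgHom.id K (A2 K) :=
  A2.algHom_ext (by simp) (by simp)

def toAut : UnitriangularPair K →* (A2 K ≃ₐ[K] A2 K) where
  toFun q := AlgEquiv.ofAlgHom q.toAlgHom q⁻¹.toAlgHom
    (by rw [← toAlgHom_mul, mul_inv_cancel, toAlgHom_one])
    (by rw [← toAlgHom_mul, inv_mul_cancel, toAlgHom_one])
  map_one' := AlgEquiv.coe_toAlgHom_injective toAlgHom_one
  map_mul' q r := AlgEquiv.coe_toAlgHom_injective (toAlgHom_mul q r)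

@[simp] lemma toAut_apply (q : UnitriangularPair K) (a : A2 K) : toAut q a = q.toAlgHom a := rfl

lemma toAut_injective : Function.Injective (toAut : UnitriangularPair K →* _) := by
  intro q r h
  have hx := congrArg (A2.retractY K) (DFunLike.congr_fun h (ι K 0))
  have hy := congrArg (A2.retractY K) (DFunLike.congr_fun h (ι K 1))
  simp only [toAut_apply, toAlgHom_x, toAlgHom_y, map_add, A2.retractY_x, A2.retractY_y,
    A2.retractY_aeval_y, AlgHom.commutes, zero_add, add_right_inj] at hx hy
  exact UnitriangularPair.ext hx (C_injective hy)

lemma range_toAut : (toAut : UnitriangularPair K →* _).range = U2 K := by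
  ext φ
  constructor
  · rintro ⟨q, rfl⟩
    refine ⟨aeval (ι K 1) q.f, ?_, q.b, by simp, by simp⟩
    rw [Algebra.adjoin_singleton_eq_range_aeval]
    exact ⟨q.f, rfl⟩
  · rintro ⟨g, hg, b, hx, hy⟩
    rw [Algebra.adjoin_singleton_eq_range_aeval] at hg
    obtain ⟨f, rfl⟩ := hg
    exact ⟨⟨f, b⟩, AlgEquiv.coe_toAlgHom_injective <| A2.algHom_ext (by simpa using hx.symm)
      (by simpa using hy.symm)⟩

def mulEquivU2 : UnitriangularPair K ≃* U2 K :=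
  (MonoidHom.ofInjective toAut_injective).trans (MulEquiv.subgroupCongr range_toAut)

lemma mulEquivU2_mem_upperCentralSeries_iff [CharZero K] (k : ℕ) (q : UnitriangularPair K) :
    mulEquivU2 q ∈ Subgroup.upperCentralSeries (U2 K) k ↔ q.b = 0 ∧ q.f.degree < k :=
  (SetLike.ext_iff.mp (Subgroup.comap_upperCentralSeries mulEquivU2 k) q).trans
    (mem_upperCentralSeries_iff k q)

end UnitriangularPair

open UnitriangularPair in
theorem upper_central_series_length_U2 (K : Type) [Field K] [CharZero K] :
    (∀ k : ℕ, upperCentralSeries ↥(U2 K) k < upperCentralSeries ↥(U2 K) (k + 1)) ∧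
    (∃ g : U2 K, ∀ k : ℕ, g ∉ upperCentralSeries ↥(U2 K) k) ∧
    (∀ g h : U2 K, ∃ k : ℕ, ⁅g, h⁆ ∈ upperCentralSeries ↥(U2 K) k) := by
  have mem_iff := mulEquivU2_mem_upperCentralSeries_iff (K := K)
  refine ⟨fun k => ?_,
    ⟨mulEquivU2 ⟨0, 1⟩, fun k hk => one_ne_zero ((mem_iff k _).mp hk).1⟩, fun g h => ?_⟩
  · refine SetLike.lt_iff_le_and_exists.mpr
      ⟨Subgroup.upperCentralSeries_mono _ k.le_succ, mulEquivU2 ⟨X ^ k, 0⟩, ?_, ?_⟩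
    · exact (mem_iff _ _).mpr ⟨rfl, by rw [degree_X_pow]; exact_mod_cast k.lt_succ_self⟩
    · exact fun hk => ((mem_iff _ _).mp hk).2.ne (degree_X_pow k)
  · obtain ⟨q, rfl⟩ := mulEquivU2.surjective g
    obtain ⟨r, rfl⟩ := mulEquivU2.surjective h
    rw [← map_commutatorElement]
    exact ⟨_, (mem_iff _ _).mpr ⟨b_commutatorElement q r,
      degree_le_natDegree.trans_lt (WithBot.coe_lt_coe.mpr (Nat.lt_succ_self _))⟩⟩
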